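/- Let n ≥ 1, Q ∈ S² ⊂ ℝ³, and let u : ℝⁿ → ℝ³ satisfy |u(x)| = 1 for all x and u − Q Schwartz. Then almost everywhere on ℝⁿ: u · (−Δ)^{1/2}u = − Σ_{j=1}^n Σ_{k=1}^3 [R_j, u_k](∂_j u_k), where u_k are the components of u and [R_j, u_k](∂_j u_k) = R_j(u_k ∂_j u_k) − u_k R_j(∂_j u_k). -/

import Mathlib

open MeasureTheory Real Set
open scoped FourierTransform Matrix

noncomputable section

/-- `f` coincides with a Schwartz function. -/
def IsSchwartz {E F : Type*} [NormedAddCommGroup E] [NormedSpace ℝ E]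
    [NormedAddCommGroup F] [NormedSpace ℝ F] (f : E → F) : Prop :=
  ∃ g : SchwartzMap E F, ∀ x, g x = f x

variable {n : ℕ}

/-- Fourier transform of a real-valued function (componentwise complexification). -/
def FT (f : EuclideanSpace ℝ (Fin n) → ℝ) : EuclideanSpace ℝ (Fin n) → ℂ :=
  𝓕 (fun x => (f x : ℂ))

/-- Squared homogeneous Sobolev seminorm `‖f‖_{Ḣ^s}²` of a scalar function. -/
def HsSq (s : ℝ) (f : EuclideanSpace ℝ (Fin n) → ℝ) : ℝ :=
  ∫ ξ : EuclideanSpace ℝ (Fin n), (2 * π * ‖ξ‖) ^ (2 * s) * ‖FT f ξ‖ ^ 2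

/-- Squared homogeneous Sobolev seminorm of an `ℝ³`-valued map. -/
def vHsSq (s : ℝ) (f : EuclideanSpace ℝ (Fin n) → Fin 3 → ℝ) : ℝ :=
  ∑ k : Fin 3, HsSq s (fun x => f x k)

/-- Squared `L²` norm of an `ℝ³`-valued map. -/
def vL2Sq (f : EuclideanSpace ℝ (Fin n) → Fin 3 → ℝ) : ℝ :=
  ∫ x : EuclideanSpace ℝ (Fin n), ∑ k : Fin 3, (f x k) ^ 2

/-- Partial derivative in the `j`-th coordinate direction. -/
def pd {F : Type*} [NormedAddCommGroup F] [NormedSpace ℝ F] (j : Fin n)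
    (f : EuclideanSpace ℝ (Fin n) → F) : EuclideanSpace ℝ (Fin n) → F :=
  fun x => fderiv ℝ f x (EuclideanSpace.single j 1)

/-- Componentwise Laplacian. -/
def lap {F : Type*} [NormedAddCommGroup F] [NormedSpace ℝ F]
    (f : EuclideanSpace ℝ (Fin n) → F) : EuclideanSpace ℝ (Fin n) → F :=
  fun x => ∑ j : Fin n, pd j (pd j f) x

/-- `(-Δ)` acting on maps. -/
def negLap {F : Type*} [NormedAddCommGroup F] [NormedSpace ℝ F]
    (f : EuclideanSpace ℝ (Fin n) → F) : EuclideanSpace ℝ (Fin n) → F :=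
  fun x => -(lap f x)

/-- Half-Laplacian of a scalar Schwartz-class function. -/
def halfLapR (f : EuclideanSpace ℝ (Fin n) → ℝ) : EuclideanSpace ℝ (Fin n) → ℝ :=
  fun x => (𝓕⁻
    (fun ξ => ((2 * π * ‖ξ‖ : ℝ) : ℂ) * FT f ξ) x).re

/-- Half-Laplacian of an `ℝ³`-valued map. -/
def halfLapV (f : EuclideanSpace ℝ (Fin n) → Fin 3 → ℝ) :
    EuclideanSpace ℝ (Fin n) → Fin 3 → ℝ :=
  fun x k => halfLapR (fun y => f y k) x

/-- The `j`-th Riesz transform. -/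
def riesz (j : Fin n) (f : EuclideanSpace ℝ (Fin n) → ℝ) :
    EuclideanSpace ℝ (Fin n) → ℝ :=
  fun x => (𝓕⁻
    (fun ξ => (-Complex.I * ((ξ j / ‖ξ‖ : ℝ) : ℂ)) * FT f ξ) x).re

/-- The effective field `ε(-Δ)^ν u + (-Δ)^{1/2} u` (with `(-Δ)^{1/2}u := (-Δ)^{1/2}(u-Q)`). -/
def llgField (eps : ℝ) (ν : ℕ) (Q : Fin 3 → ℝ)
    (u : EuclideanSpace ℝ (Fin n) → Fin 3 → ℝ) :
    EuclideanSpace ℝ (Fin n) → Fin 3 → ℝ :=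
  fun x => eps • (negLap^[ν] u) x + halfLapV (fun y => u y - Q) x

/-- Classical solution on the time set `I` of the regularized dissipative
Landau-Lifshitz equation `∂ₜ u = u × h + λ u × (u × h)`,
`h = ε(-Δ)^ν u + (-Δ)^{1/2} u`, with exponent `ν`. -/
structure IsRegLLGSolution (n : ℕ) (lam eps : ℝ) (ν : ℕ) (Q : Fin 3 → ℝ) (I : Set ℝ)
    (u : ℝ → EuclideanSpace ℝ (Fin n) → Fin 3 → ℝ) : Prop where
  smooth : ContDiff ℝ (⊤ : ℕ∞) (fun p : ℝ × EuclideanSpace ℝ (Fin n) => u p.1 p.2)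
  sphere : ∀ t x, ∑ k : Fin 3, (u t x k) ^ 2 = 1
  schwartz : ∀ t, IsSchwartz (fun x => u t x - Q)
  seminorm_cont : ∀ s : ℝ, 0 ≤ s → Continuous (fun t => vHsSq s (fun x => u t x - Q))
  deriv_l2_cont : Continuous
    (fun t => ∫ x : EuclideanSpace ℝ (Fin n), ∑ k : Fin 3, (deriv (fun τ => u τ x) t k) ^ 2)
  eqn : ∀ t ∈ I, ∀ x, deriv (fun τ => u τ x) t =
    u t x ⨯₃ llgField eps ν Q (u t) x
      + lam • (u t x ⨯₃ (u t x ⨯₃ llgField eps ν Q (u t) x))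

/-- Regularized energy `E_ε(w) = ½(ε‖∂ₓw‖_{L²}² + ‖w‖_{Ḣ^{1/2}}²)` for `n = 1`, `ν = 1`. -/
def energy1 (eps : ℝ) (Q : Fin 3 → ℝ) (w : EuclideanSpace ℝ (Fin 1) → Fin 3 → ℝ) : ℝ :=
  (eps * (∫ x : EuclideanSpace ℝ (Fin 1), ∑ k : Fin 3, (pd 0 w x k) ^ 2)
    + vHsSq (1 / 2) (fun x => w x - Q)) / 2

/-- Regularized energy `E_ε(w) = ½(ε‖Δw‖_{L²}² + ‖w‖_{Ḣ^{1/2}}²)` for `ν = 2`. -/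
def energy2 {n : ℕ} (eps : ℝ) (Q : Fin 3 → ℝ)
    (w : EuclideanSpace ℝ (Fin n) → Fin 3 → ℝ) : ℝ :=
  (eps * (∫ x : EuclideanSpace ℝ (Fin n), ∑ k : Fin 3, (lap w x k) ^ 2)
    + vHsSq (1 / 2) (fun x => w x - Q)) / 2


open SchwartzMap
open scoped RealInnerProductSpace

variable {n : ℕ}

def pderivCLM (_ : Type) (m : EuclideanSpace ℝ (Fin n)) :
    𝓢(EuclideanSpace ℝ (Fin n), ℝ) →L[ℝ] 𝓢(EuclideanSpace ℝ (Fin n), ℝ) :=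
  SchwartzMap.evalCLM ℝ _ ℝ m ∘L SchwartzMap.fderivCLM ℝ _ ℝ

lemma pderivCLM_apply (m : EuclideanSpace ℝ (Fin n)) (f : 𝓢(EuclideanSpace ℝ (Fin n), ℝ))
    (x : EuclideanSpace ℝ (Fin n)) : pderivCLM ℝ m f x = fderiv ℝ f x m := rfl

def cplxS (f : 𝓢(EuclideanSpace ℝ (Fin n), ℝ)) : 𝓢(EuclideanSpace ℝ (Fin n), ℂ) :=
  SchwartzMap.bilinLeftCLM (ContinuousLinearMap.lsmul ℝ ℝ : ℝ →L[ℝ] ℂ →L[ℝ] ℂ)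
    (Function.HasTemperateGrowth.const (1 : ℂ)) f

lemma cplxS_apply (f : 𝓢(EuclideanSpace ℝ (Fin n), ℝ)) (x : EuclideanSpace ℝ (Fin n)) :
    cplxS f x = (f x : ℂ) := by
  show f x • (1 : ℂ) = _
  rw [Complex.real_smul, mul_one]

def proj3 (g : 𝓢(EuclideanSpace ℝ (Fin n), Fin 3 → ℝ)) (k : Fin 3) :
    𝓢(EuclideanSpace ℝ (Fin n), ℝ) :=
  SchwartzMap.bilinLeftCLM ((ContinuousLinearMap.mul ℝ ℝ).comp (ContinuousLinearMap.proj k))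
    (Function.HasTemperateGrowth.const (1 : ℝ)) g

lemma proj3_apply (g : 𝓢(EuclideanSpace ℝ (Fin n), Fin 3 → ℝ)) (k : Fin 3)
    (x : EuclideanSpace ℝ (Fin n)) : proj3 g k x = g x k := by
  show g x k * 1 = _
  rw [mul_one]

lemma schwartz_add_const_temperate (f : 𝓢(EuclideanSpace ℝ (Fin n), ℝ)) (c : ℝ) :
    Function.HasTemperateGrowth (fun x => f x + c) := by
  refine ⟨f.smooth'.add contDiff_const, fun N => ⟨0, SchwartzMap.seminorm ℝ 0 N f + ‖c‖, fun x => ?_⟩⟩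
  have h1 : (fun x : EuclideanSpace ℝ (Fin n) => f x + c) = ⇑f + (fun _ => c) := rfl
  rw [h1, iteratedFDeriv_add_apply ((f.smooth _).contDiffAt) contDiff_const.contDiffAt, pow_zero, mul_one]
  refine (norm_add_le _ _).trans (add_le_add ?_ ?_)
  · exact SchwartzMap.norm_iteratedFDeriv_le_seminorm ℝ f N x
  · rcases Nat.eq_zero_or_pos N with h | h
    · subst h; rw [norm_iteratedFDeriv_zero]
    · rw [iteratedFDeriv_const_of_ne h.ne']; simp [norm_nonneg]

open SchwartzMap in
lemma ft_eq (f : 𝓢(EuclideanSpace ℝ (Fin n), ℝ)) : FT ⇑f = 𝓕 ⇑(cplxS f) := by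
  have h : (fun x : EuclideanSpace ℝ (Fin n) => ((f x : ℝ) : ℂ)) = ⇑(cplxS f) :=
    funext fun x => (cplxS_apply f x).symm
  unfold FT
  rw [h]

open SchwartzMap in
lemma ftInt (f : 𝓢(EuclideanSpace ℝ (Fin n), ℝ)) : Integrable (FT ⇑f) := by
  rw [ft_eq, ← SchwartzMap.fourier_coe, ← SchwartzMap.fourierTransformCLM_apply ℝ]
  exact (SchwartzMap.fourierTransformCLM ℝ (cplxS f)).integrable

open SchwartzMap in
lemma ftCont (f : 𝓢(EuclideanSpace ℝ (Fin n), ℝ)) : Continuous (FT ⇑f) := by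
  rw [ft_eq, ← SchwartzMap.fourier_coe, ← SchwartzMap.fourierTransformCLM_apply ℝ]
  exact (SchwartzMap.fourierTransformCLM ℝ (cplxS f)).continuous

open SchwartzMap in
lemma ft_pderiv (f : 𝓢(EuclideanSpace ℝ (Fin n), ℝ)) (j : Fin n) :
    FT ⇑(pderivCLM ℝ (EuclideanSpace.single j 1) f) =
      fun ξ => (2 * π * Complex.I * (ξ j : ℂ)) * FT ⇑f ξ := by
  set F := cplxS f with hF
  have hfd_eq : fderiv ℝ ⇑F = ⇑(SchwartzMap.fderivCLM ℝ _ _ F) := by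
    funext x; exact (SchwartzMap.fderivCLM_apply ℝ F x).symm
  have hint' : Integrable (fderiv ℝ ⇑F) := hfd_eq ▸ (SchwartzMap.fderivCLM ℝ _ _ F).integrable
  have key := Real.fourier_fderiv F.integrable F.differentiable hint'
  funext ξ
  have h1 : FT ⇑(pderivCLM ℝ (EuclideanSpace.single j 1) f) ξ
      = 𝓕 (fun x => fderiv ℝ ⇑F x (EuclideanSpace.single j 1)) ξ := by
    unfold FT
    refine congrArg (fun g : EuclideanSpace ℝ (Fin n) → ℂ => 𝓕 g ξ) ?_
    funext x
    rw [pderivCLM_apply]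
    have hc : ⇑F = ⇑Complex.ofRealCLM ∘ ⇑f := by
      funext y; rw [Function.comp_apply, hF, cplxS_apply]; rfl
    rw [hc, fderiv_comp x Complex.ofRealCLM.differentiableAt f.differentiableAt,
      ContinuousLinearMap.fderiv]
    rfl
  rw [h1, ← Real.fourier_continuousLinearMap_apply hint', key]
  have h2 : ((-innerSL ℝ) ξ) (EuclideanSpace.single j 1) = -(ξ j) := by
    simp [EuclideanSpace.inner_single_right]
  rw [VectorFourier.fourierSMulRight_apply]
  rw [h2]
  rw [← ft_eq]
  push_cast
  simp only [smul_eq_mul, Complex.real_smul]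
  push_cast
  ring

lemma integrable_char_smul {x : EuclideanSpace ℝ (Fin n)} {f : EuclideanSpace ℝ (Fin n) → ℂ}
    (hf : Integrable f) :
    Integrable (fun v => 𝐞 ((inner ℝ v x : ℝ)) • f v) := by
  have hc : Continuous fun v : EuclideanSpace ℝ (Fin n) => 𝐞 ((inner ℝ v x : ℝ)) :=
    Real.continuous_fourierChar.comp (continuous_id.inner continuous_const)
  have meas : AEStronglyMeasurable (fun v => 𝐞 ((inner ℝ v x : ℝ)) • f v) volume :=
    hc.aestronglyMeasurable.smul hf.1
  rw [← integrable_norm_iff meas]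
  simp_rw [Circle.norm_smul]
  exact hf.norm

lemma invFT_sum {ι : Type*} (s : Finset ι) (f : ι → EuclideanSpace ℝ (Fin n) → ℂ)
    (hf : ∀ i ∈ s, Integrable (f i)) (x : EuclideanSpace ℝ (Fin n)) :
    𝓕⁻ (fun ξ => ∑ i ∈ s, f i ξ) x
      = ∑ i ∈ s, 𝓕⁻ (f i) x := by
  rw [Real.fourierInv_eq]
  simp_rw [Finset.smul_sum]
  rw [integral_finset_sum s (fun i hi => integrable_char_smul (hf i hi))]
  refine Finset.sum_congr rfl fun i _ => ?_
  rw [Real.fourierInv_eq]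

lemma mker_bound (j : Fin n) (ξ : EuclideanSpace ℝ (Fin n)) :
    ‖-Complex.I * ((ξ j / ‖ξ‖ : ℝ) : ℂ)‖ ≤ 1 := by
  rw [norm_mul, norm_neg, Complex.norm_I, one_mul, Complex.norm_real, Real.norm_eq_abs, abs_div,
    abs_norm]
  have h1 : |ξ j| ≤ ‖ξ‖ := by
    rw [EuclideanSpace.norm_eq]
    have : |ξ j| = Real.sqrt (ξ j ^ 2) := by rw [Real.sqrt_sq_eq_abs]
    rw [this]
    apply Real.sqrt_le_sqrt
    have := Finset.single_le_sum (f := fun i => ‖ξ i‖ ^ 2)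
      (fun i _ => by positivity) (Finset.mem_univ j)
    simpa [sq_abs] using this
  exact div_le_one_of_le₀ h1 (norm_nonneg _)

lemma mker_meas (j : Fin n) :
    AEStronglyMeasurable (fun ξ : EuclideanSpace ℝ (Fin n) =>
      -Complex.I * ((ξ j / ‖ξ‖ : ℝ) : ℂ)) volume := by
  apply Measurable.aestronglyMeasurable
  apply Measurable.const_mul
  exact Complex.measurable_ofReal.comp ((EuclideanSpace.proj j : EuclideanSpace ℝ (Fin n) →L[ℝ] ℝ).continuous.measurable.div continuous_norm.measurable)

lemma integrable_mker_ft (j : Fin n) (f : 𝓢(EuclideanSpace ℝ (Fin n), ℝ)) :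
    Integrable (fun ξ => (-Complex.I * ((ξ j / ‖ξ‖ : ℝ) : ℂ)) * FT ⇑f ξ) :=
  (ftInt f).bdd_mul (mker_meas j) (Filter.Eventually.of_forall (mker_bound j))

lemma coord_sq_div_norm (ξ : EuclideanSpace ℝ (Fin n)) :
    ∑ j : Fin n, ξ j * ξ j / ‖ξ‖ = ‖ξ‖ := by
  by_cases hξ : ξ = 0
  · subst hξ; simp
  · have hn : ‖ξ‖ ≠ 0 := norm_ne_zero_iff.2 hξ
    have h2 : ∑ j : Fin n, ξ j ^ 2 = ‖ξ‖ ^ 2 := by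
      rw [EuclideanSpace.norm_eq, Real.sq_sqrt (by positivity)]
      simp [sq_abs]
    rw [← Finset.sum_div]
    simp_rw [← sq]
    rw [h2, sq, mul_div_assoc, div_self hn, mul_one]

lemma mult_identity (ξ : EuclideanSpace ℝ (Fin n)) :
    ∑ j : Fin n, (-Complex.I * ((ξ j / ‖ξ‖ : ℝ) : ℂ)) * (2 * π * Complex.I * (ξ j : ℂ))
      = ((2 * π * ‖ξ‖ : ℝ) : ℂ) := by
  have h : ∀ j : Fin n, (-Complex.I * ((ξ j / ‖ξ‖ : ℝ) : ℂ)) * (2 * π * Complex.I * (ξ j : ℂ))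
      = ((2 * π * (ξ j * ξ j / ‖ξ‖) : ℝ) : ℂ) := by
    intro j
    push_cast
    have hI : Complex.I * Complex.I = -1 := Complex.I_mul_I
    field_simp
    ring_nf
    rw [Complex.I_sq]
    ring
  rw [Finset.sum_congr rfl fun j _ => h j, ← Complex.ofReal_sum]
  exact congrArg Complex.ofReal (by rw [← Finset.mul_sum, coord_sq_div_norm])

lemma sum_riesz_eq_halfLap (f : 𝓢(EuclideanSpace ℝ (Fin n), ℝ)) (x : EuclideanSpace ℝ (Fin n)) :
    ∑ j : Fin n, riesz j ⇑(pderivCLM ℝ (EuclideanSpace.single j 1) f) x = halfLapR ⇑f x := by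
  unfold riesz halfLapR
  rw [← Complex.re_sum]
  congr 1
  rw [← invFT_sum Finset.univ _ (fun j _ => integrable_mker_ft j _) x]
  refine congrArg (fun g : EuclideanSpace ℝ (Fin n) → ℂ => 𝓕⁻ g x) ?_
  funext ξ
  have hp : ∀ j : Fin n, FT ⇑(pderivCLM ℝ (EuclideanSpace.single j 1) f) ξ
      = (2 * π * Complex.I * (ξ j : ℂ)) * FT ⇑f ξ := fun j => by rw [ft_pderiv]
  calc ∑ j : Fin n, -Complex.I * ((ξ j / ‖ξ‖ : ℝ) : ℂ)
        * FT ⇑(pderivCLM ℝ (EuclideanSpace.single j 1) f) ξ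
      = ∑ j : Fin n, (-Complex.I * ((ξ j / ‖ξ‖ : ℝ) : ℂ)
        * (2 * π * Complex.I * (ξ j : ℂ))) * FT ⇑f ξ := by
        refine Finset.sum_congr rfl fun j _ => ?_
        rw [hp j]; ring
    _ = ((2 * π * ‖ξ‖ : ℝ) : ℂ) * FT ⇑f ξ := by rw [← Finset.sum_mul, mult_identity]

lemma ft_sum_zero (q : Fin 3 → 𝓢(EuclideanSpace ℝ (Fin n), ℝ))
    (hq : ∀ y, ∑ k : Fin 3, q k y = 0) (ξ : EuclideanSpace ℝ (Fin n)) :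
    ∑ k : Fin 3, FT ⇑(q k) ξ = 0 := by
  unfold FT
  simp_rw [Real.fourier_eq]
  rw [← integral_finset_sum]
  · have h0 : ∀ v, ∑ k : Fin 3, 𝐞 (-(inner ℝ v ξ : ℝ)) • ((q k v : ℝ) : ℂ) = 0 := by
      intro v
      rw [← Finset.smul_sum]
      have : ∑ k : Fin 3, ((q k v : ℝ) : ℂ) = 0 := by
        rw [← Complex.ofReal_sum, hq v, Complex.ofReal_zero]
      rw [this, smul_zero]
    simp_rw [h0]
    exact integral_zero _ _
  · intro k _
    have hint : Integrable (fun v : EuclideanSpace ℝ (Fin n) => ((q k v : ℝ) : ℂ)) :=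
      (cplxS (q k)).integrable.congr (Filter.Eventually.of_forall fun v => cplxS_apply (q k) v)
    exact (Real.fourierIntegral_convergent_iff ξ).2 hint

lemma sum_riesz_zero (j : Fin n) (q : Fin 3 → 𝓢(EuclideanSpace ℝ (Fin n), ℝ))
    (hq : ∀ y, ∑ k : Fin 3, q k y = 0) (x : EuclideanSpace ℝ (Fin n)) :
    ∑ k : Fin 3, riesz j ⇑(q k) x = 0 := by
  unfold riesz
  rw [← Complex.re_sum]
  rw [← invFT_sum Finset.univ _ (fun k _ => integrable_mker_ft j _) x]
  have h0 : (fun ξ : EuclideanSpace ℝ (Fin n) =>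
      ∑ k : Fin 3, -Complex.I * ((ξ j / ‖ξ‖ : ℝ) : ℂ) * FT ⇑(q k) ξ) = fun _ => (0 : ℂ) := by
    funext ξ
    rw [← Finset.mul_sum, ft_sum_zero q hq ξ, mul_zero]
  rw [h0]
  simp [Real.fourierInv_eq]

/-- commutator structure of the projection term. For a sphere-valued map
`u` with `u - Q` Schwartz, almost everywhere
`u · (-Δ)^{1/2}u = -Σⱼ Σₖ [Rⱼ, uₖ](∂ⱼuₖ)`, where
`[Rⱼ, uₖ](∂ⱼuₖ) = Rⱼ(uₖ∂ⱼuₖ) - uₖ Rⱼ(∂ⱼuₖ)`. -/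
theorem halfLaplacian_commutator_structure (n : ℕ) (hn : 1 ≤ n)
    (Q : Fin 3 → ℝ) (hQ : ∑ k : Fin 3, Q k ^ 2 = 1)
    (u : EuclideanSpace ℝ (Fin n) → Fin 3 → ℝ)
    (hsphere : ∀ x, ∑ k : Fin 3, (u x k) ^ 2 = 1)
    (hS : IsSchwartz (fun x => u x - Q)) :
    ∀ᵐ x : EuclideanSpace ℝ (Fin n),
      ∑ k : Fin 3, u x k * halfLapV (fun y => u y - Q) x k
        = -∑ j : Fin n, ∑ k : Fin 3,
            (riesz j (fun y => u y k * pd j (fun z => u z k) y) x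
              - u x k * riesz j (pd j (fun z => u z k)) x) := by
  obtain ⟨g, hg⟩ := hS
  refine Filter.Eventually.of_forall fun x => ?_
  set gk : Fin 3 → 𝓢(EuclideanSpace ℝ (Fin n), ℝ) := fun k => proj3 g k with hgkdef
  have hgk : ∀ k y, gk k y = u y k - Q k := fun k y => by
    rw [hgkdef, proj3_apply, hg y]; rfl
  have hu : ∀ k, (fun z => u z k) = fun z => gk k z + Q k := fun k =>
    funext fun z => by rw [hgk k z]; ring
  have hpd : ∀ (j : Fin n) k, pd j (fun z => u z k)
      = ⇑(pderivCLM ℝ (EuclideanSpace.single j 1) (gk k)) := by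
    intro j k
    funext y
    rw [pderivCLM_apply]
    show fderiv ℝ (fun z => u z k) y (EuclideanSpace.single j 1) = _
    rw [hu k, fderiv_add_const]
  have temper : ∀ k, Function.HasTemperateGrowth (fun y => u y k) := fun k =>
    (hu k) ▸ schwartz_add_const_temperate (gk k) (Q k)
  set q : Fin n → Fin 3 → 𝓢(EuclideanSpace ℝ (Fin n), ℝ) := fun j k =>
    SchwartzMap.bilinLeftCLM (ContinuousLinearMap.mul ℝ ℝ) (temper k)
      (pderivCLM ℝ (EuclideanSpace.single j 1) (gk k)) with hqdef
  have hq_apply : ∀ j k y, q j k y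
      = pderivCLM ℝ (EuclideanSpace.single j 1) (gk k) y * u y k := fun j k y => rfl
  have hzero : ∀ (j : Fin n) y, ∑ k : Fin 3, q j k y = 0 := by
    intro j y
    have hder : ∀ k, HasFDerivAt (fun z => u z k) (fderiv ℝ (⇑(gk k)) y) y := by
      intro k
      rw [hu k]
      exact ((gk k).differentiableAt.hasFDerivAt).add_const (Q k)
    have h1 : HasFDerivAt (fun z => ∑ k : Fin 3, u z k * u z k)
        (∑ k : Fin 3, (u y k • fderiv ℝ (⇑(gk k)) y + u y k • fderiv ℝ (⇑(gk k)) y)) y :=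
      HasFDerivAt.fun_sum fun k _ => (hder k).mul (hder k)
    have hfun : (fun z => ∑ k : Fin 3, u z k * u z k) = fun _ => (1 : ℝ) := by
      funext z
      simp only [← pow_two]
      exact hsphere z
    rw [hfun] at h1
    have h3 := h1.unique (hasFDerivAt_const 1 y)
    have h4 : ∑ k : Fin 3,
        (u y k * (fderiv ℝ (⇑(gk k)) y (EuclideanSpace.single j 1))
          + u y k * (fderiv ℝ (⇑(gk k)) y (EuclideanSpace.single j 1))) = 0 := by
      have := congrArg (fun L : EuclideanSpace ℝ (Fin n) →L[ℝ] ℝ =>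
        L (EuclideanSpace.single j 1)) h3
      simpa [ContinuousLinearMap.sum_apply, ContinuousLinearMap.add_apply,
        ContinuousLinearMap.smul_apply, smul_eq_mul] using this
    have h5 : ∑ k : Fin 3, q j k y = (∑ k : Fin 3,
        (u y k * (fderiv ℝ (⇑(gk k)) y (EuclideanSpace.single j 1))
          + u y k * (fderiv ℝ (⇑(gk k)) y (EuclideanSpace.single j 1)))) / 2 := by
      rw [Finset.sum_div]
      refine Finset.sum_congr rfl fun k _ => ?_
      rw [hq_apply, pderivCLM_apply]
      ring
    rw [h5, h4, zero_div]
  have hA : ∀ j : Fin n,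
      ∑ k : Fin 3, riesz j (fun y => u y k * pd j (fun z => u z k) y) x = 0 := by
    intro j
    have hfn : ∀ k : Fin 3, (fun y => u y k * pd j (fun z => u z k) y) = ⇑(q j k) := by
      intro k
      funext y
      rw [hpd j k, hq_apply]
      ring
    rw [Finset.sum_congr rfl fun k _ => by rw [hfn k]]
    exact sum_riesz_zero j (q j) (hzero j) x
  have hL : ∀ k : Fin 3, halfLapV (fun y => u y - Q) x k = halfLapR ⇑(gk k) x := by
    intro k
    show halfLapR (fun y => (u y - Q) k) x = _
    congr 1
    funext y
    rw [Pi.sub_apply, ← hgk k y]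
  calc ∑ k : Fin 3, u x k * halfLapV (fun y => u y - Q) x k
      = ∑ k : Fin 3, u x k * ∑ j : Fin n,
          riesz j ⇑(pderivCLM ℝ (EuclideanSpace.single j 1) (gk k)) x := by
        refine Finset.sum_congr rfl fun k _ => ?_
        rw [hL k, sum_riesz_eq_halfLap]
    _ = ∑ j : Fin n, ∑ k : Fin 3, u x k * riesz j (pd j (fun z => u z k)) x := by
        simp_rw [Finset.mul_sum]
        rw [Finset.sum_comm]
        refine Finset.sum_congr rfl fun j _ => Finset.sum_congr rfl fun k _ => ?_
        rw [hpd j k]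
    _ = -∑ j : Fin n, ∑ k : Fin 3,
          (riesz j (fun y => u y k * pd j (fun z => u z k) y) x
            - u x k * riesz j (pd j (fun z => u z k)) x) := by
        rw [← Finset.sum_neg_distrib]
        refine Finset.sum_congr rfl fun j _ => ?_
        rw [← Finset.sum_neg_distrib]
        simp only [neg_sub]
        rw [Finset.sum_sub_distrib, hA j, sub_zero]

end
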